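/- arXiv:2410.23155 — 3 statements merged into one kernel-verified Lean document; each statement's English description precedes it below -/
import Mathlib

section
/- Let Σ_X be a symmetric positive definite n×n matrix with whitening matrix W (so W⁻¹W⁻ᵀ = Σ_X). For any n×n matrix B with I − B invertible, there exists a diagonal matrix Σ with Σ_X = (I−B)⁻¹ Σ (I−B)⁻ᵀ if and only if there exists a matrix Q with Q Qᵀ diagonal such that B = I − Q W. -/
/-!
Writing `Q := (1 - B) W⁻¹`, i.e. `1 - B = Q W`, the equation `Σ_X = (1-B)⁻¹ Σ (1-B)⁻ᵀ` is
equivalent to `Σ = (1-B) W⁻¹ W⁻ᵀ (1-B)ᵀ = Q Qᵀ`. Hence `Σ` is diagonal exactly when `Q` is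
scaled-orthogonal, and `Q Qᵀ` is automatically positive definite since `Q` is invertible.
-/

open Matrix

namespace Matrix

variable {ι R : Type*} [Fintype ι] [DecidableEq ι] [CommRing R]

theorem eq_inv_mul_mul_transpose_inv_iff {M X S : Matrix ι ι R} (hM : IsUnit M.det) :
    X = M⁻¹ * S * M⁻¹ᵀ ↔ M * X * Mᵀ = S := by
  have hMt : IsUnit Mᵀ.det := by rwa [det_transpose]
  constructor
  · rintro rfl
    rw [transpose_nonsing_inv, ← mul_assoc, ← mul_assoc, mul_nonsing_inv _ hM, one_mul,
      mul_assoc, nonsing_inv_mul _ hMt, mul_one]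
  · rintro rfl
    rw [transpose_nonsing_inv, ← mul_assoc, ← mul_assoc, nonsing_inv_mul _ hM, one_mul,
      mul_assoc, mul_nonsing_inv _ hMt, mul_one]

theorem mul_mul_inv_mul_transpose_inv_mul_transpose {W : Matrix ι ι R} (hW : IsUnit W.det)
    (Q : Matrix ι ι R) : Q * W * (W⁻¹ * W⁻¹ᵀ) * (Q * W)ᵀ = Q * Qᵀ := by
  have hWt : IsUnit Wᵀ.det := by rwa [det_transpose]
  calc Q * W * (W⁻¹ * W⁻¹ᵀ) * (Q * W)ᵀ = Q * (W * W⁻¹) * (Wᵀ⁻¹ * Wᵀ) * Qᵀ := by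
        simp only [transpose_mul, transpose_nonsing_inv, mul_assoc]
    _ = Q * Qᵀ := by rw [mul_nonsing_inv _ hW, nonsing_inv_mul _ hWt, mul_one, mul_one]

end Matrix

theorem mem_BX_iff_exists_scaledOrthogonal_general {n : ℕ} (Sx W B : Matrix (Fin n) (Fin n) ℝ)
    (hW : W.PosDef) (hWX : W⁻¹ * (W⁻¹)ᵀ = Sx)
    (hB : IsUnit (1 - B).det) :
    (∃ S : Matrix (Fin n) (Fin n) ℝ, S.IsDiag ∧ S.PosDef ∧
        Sx = (1 - B)⁻¹ * S * ((1 - B)⁻¹)ᵀ) ↔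
      (∃ Q : Matrix (Fin n) (Fin n) ℝ, IsUnit Q.det ∧ (Q * Qᵀ).IsDiag ∧ B = 1 - Q * W) := by
  have hWdet : IsUnit W.det := hW.det_pos.ne'.isUnit
  subst hWX
  constructor
  · rintro ⟨S, hS, -, hSx⟩
    set Q := (1 - B) * W⁻¹
    have h1B : 1 - B = Q * W := by rw [mul_assoc, nonsing_inv_mul _ hWdet, mul_one]
    have hQQ : Q * Qᵀ = S := by
      rw [← (eq_inv_mul_mul_transpose_inv_iff hB).1 hSx, h1B,
        mul_mul_inv_mul_transpose_inv_mul_transpose hWdet]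
    refine ⟨Q, ?_, hQQ ▸ hS, by rw [← h1B, sub_sub_cancel]⟩
    rw [det_mul, det_nonsing_inv]
    exact hB.mul hWdet.ringInverse
  · rintro ⟨Q, hQ, hQQ, rfl⟩
    rw [sub_sub_cancel] at hB
    have hQinj : Function.Injective Q.vecMul :=
      vecMul_injective_iff_isUnit.2 ((isUnit_iff_isUnit_det Q).2 hQ)
    refine ⟨Q * Qᵀ, hQQ, by simpa using PosDef.mul_conjTranspose_self Q hQinj, ?_⟩
    rw [sub_sub_cancel, eq_inv_mul_mul_transpose_inv_iff hB,
      mul_mul_inv_mul_transpose_inv_mul_transpose hWdet]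

/-- `Σ_X = (I-B)⁻¹ Σ (I-B)⁻ᵀ` for some diagonal (positive definite) `Σ` iff
`B = I - Q W` for some (invertible) matrix `Q` with `Q Qᵀ` diagonal, where `W` is the
whitening matrix of `Σ_X`, i.e. `W⁻¹ W⁻ᵀ = Σ_X`. -/
theorem mem_BX_iff_exists_scaledOrthogonal {n : ℕ} (Sx W B : Matrix (Fin n) (Fin n) ℝ)
    (hW : W.PosDef) (hWsymm : Wᵀ = W) (hWX : W⁻¹ * (W⁻¹)ᵀ = Sx)
    (hB : IsUnit (1 - B).det) :
    (∃ S : Matrix (Fin n) (Fin n) ℝ, S.IsDiag ∧ S.PosDef ∧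
        Sx = (1 - B)⁻¹ * S * ((1 - B)⁻¹)ᵀ) ↔
      (∃ Q : Matrix (Fin n) (Fin n) ℝ, IsUnit Q.det ∧ (Q * Qᵀ).IsDiag ∧ B = 1 - Q * W) :=
  mem_BX_iff_exists_scaledOrthogonal_general Sx W B hW hWX hB
end

section
/- Let w₁, …, wₙ be linearly independent in ℝⁿ and q₁, …, qₙ produced by the reverse Gram–Schmidt recursion. If a permutation π' agrees with π on all positions outside an interval [l, r] and the sets {π(k) : k in [l,r]} and {π'(k) : k in [l,r]} of indices are equal, then the vectors q constructed from the reordered family agree at all positions k < l and k > r with those constructed from the original family. -/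
/-!
By downward induction on `i`, the vectors `q j` with `j > i` are pairwise orthogonal and span the
same space `K i` as the `v j` with `j > i`. Hence `res i` is the component of `v i` orthogonal to
`K i`, nonzero by linear independence, and `q i` depends only on `v i` and `K i`. For
`v = w ∘ π` and a position `k` outside the block, neither changes when `π` is replaced by `π'`:
`K k` is spanned by the `w m` with `m ∈ π '' Ioi k`, a set that the block permutation preserves.
-/

open RealInnerProductSpace Finset Submodule

theorem Set.image_Ioi_eq_of_eqOn_compl_Icc {α β : Type*} [LinearOrder α] {f g : α → β}
    {l r k : α} (hfg : ∀ a, (a < l ∨ r < a) → f a = g a)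
    (hIcc : f '' Set.Icc l r = g '' Set.Icc l r) (hk : k < l ∨ r < k) :
    f '' Set.Ioi k = g '' Set.Ioi k := by
  rcases hk with hk | hk
  · have hsplit : Set.Ioi k = Set.Icc l r ∪ (Set.Ioi k \ Set.Icc l r) :=
      (Set.union_sdiff_cancel fun a ha => hk.trans_le ha.1).symm
    have hout : Set.EqOn f g (Set.Ioi k \ Set.Icc l r) := fun a ha =>
      hfg a (by simpa only [Set.mem_Icc, not_and_or, not_le] using ha.2)
    rw [hsplit, Set.image_union, Set.image_union, hIcc, hout.image_eq]
  · exact Set.EqOn.image_eq fun a ha => hfg a (Or.inr (hk.trans ha))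

theorem Submodule.span_image_Ioi_le {R M ι : Type*} [Semiring R] [AddCommMonoid M] [Module R M]
    [Preorder ι] {a b : ι → M} {i : ι} (h : ∀ j, i < j → a j ∈ span R (b '' Set.Ici j)) :
    span R (a '' Set.Ioi i) ≤ span R (b '' Set.Ioi i) :=
  span_le.mpr <| Set.image_subset_iff.mpr fun j hj =>
    span_mono (Set.image_mono (Set.Ici_subset_Ioi.mpr hj)) (h j hj)

section RCLike

variable {𝕜 E : Type*} [RCLike 𝕜] [NormedAddCommGroup E] [InnerProductSpace 𝕜 E]

theorem Submodule.mem_orthogonal_span_iff {s : Set E} {x : E} :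
    x ∈ (span 𝕜 s)ᗮ ↔ ∀ u ∈ s, inner 𝕜 u x = 0 := by
  rw [← span_singleton_le_iff_mem (R := 𝕜), ← isOrtho_iff_le, isOrtho_comm, isOrtho_span]
  simp

theorem Submodule.eq_of_sub_mem_of_mem_orthogonal {K : Submodule 𝕜 E} {x y : E}
    (hxy : x - y ∈ K) (hx : x ∈ Kᗮ) (hy : y ∈ Kᗮ) : x = y := by
  have h : x - y ∈ K ⊓ Kᗮ := ⟨hxy, Kᗮ.sub_mem hx hy⟩
  rwa [K.inf_orthogonal_eq_bot, mem_bot, sub_eq_zero] at h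

end RCLike

section ReverseGramSchmidt

variable {E : Type*} [NormedAddCommGroup E] [InnerProductSpace ℝ E]

-- A vanishing `q a` contributes nothing to the sum, so the junk value of its coefficient
-- is harmless.
theorem inner_sub_sum_orthogonal_expansion_eq_zero {ι : Type*} {s : Finset ι} {q : ι → E}
    (hq : (s : Set ι).Pairwise fun a b => ⟪q a, q b⟫ = 0) (x : E) {j : ι} (hj : j ∈ s) :
    ⟪x - ∑ a ∈ s, (⟪x, q a⟫ / ‖q a‖ ^ 2) • q a, q j⟫ = 0 := by
  have hsum : ∑ a ∈ s, ⟪(⟪x, q a⟫ / ‖q a‖ ^ 2) • q a, q j⟫ = ⟪x, q j⟫ := by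
    rw [Finset.sum_eq_single_of_mem j hj fun a ha hne => by
      rw [real_inner_smul_left, hq ha hj hne, mul_zero]]
    rw [real_inner_smul_left, real_inner_self_eq_norm_sq]
    rcases eq_or_ne (q j) 0 with h0 | h0
    · simp [h0]
    · field_simp
  rw [inner_sub_left, sum_inner, hsum, sub_self]

variable {ι : Type*} [LinearOrder ι] [LocallyFiniteOrderTop ι]

structure IsReverseGramSchmidt (v res q : ι → E) : Prop where
  res_eq : ∀ i, res i = v i - ∑ j ∈ Ioi i, (⟪v i, q j⟫ / ‖q j‖ ^ 2) • q j
  q_eq : ∀ i, q i = (⟪res i, v i⟫)⁻¹ • res i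

namespace IsReverseGramSchmidt

variable {v res q : ι → E}

theorem sub_res_mem_span_q (h : IsReverseGramSchmidt v res q) (i : ι) :
    v i - res i ∈ span ℝ (q '' Set.Ioi i) := by
  rw [h.res_eq i, sub_sub_cancel]
  exact sum_smul_mem _ _ fun j hj => subset_span ⟨j, by simpa using hj, rfl⟩

theorem inner_res_q_eq_zero (h : IsReverseGramSchmidt v res q) {i j : ι}
    (hq : (Set.Ioi i).Pairwise fun a b => ⟪q a, q b⟫ = 0) (hij : i < j) : ⟪res i, q j⟫ = 0 := by
  rw [h.res_eq i]
  exact inner_sub_sum_orthogonal_expansion_eq_zero (by simpa using hq) _ (by simpa using hij)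

theorem inner_q_eq_zero_of_lt (h : IsReverseGramSchmidt v res q) {j j' : ι}
    (hj : res j ∈ (span ℝ (v '' Set.Ioi j))ᗮ)
    (hj' : q j' ∈ span ℝ (v '' Set.Ici j')) (hlt : j < j') : ⟪q j, q j'⟫ = 0 := by
  have hmem : q j' ∈ span ℝ (v '' Set.Ioi j) :=
    span_mono (Set.image_mono (Set.Ici_subset_Ioi.mpr hlt)) hj'
  rw [h.q_eq j, real_inner_smul_left, inner_eq_zero_symm.mp (hj _ hmem), mul_zero]

theorem pairwise_inner_q_eq_zero (h : IsReverseGramSchmidt v res q) {i : ι}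
    (horth : ∀ j, i < j → res j ∈ (span ℝ (v '' Set.Ioi j))ᗮ)
    (hq : ∀ j, i < j → q j ∈ span ℝ (v '' Set.Ici j)) :
    (Set.Ioi i).Pairwise fun a b => ⟪q a, q b⟫ = 0 := by
  intro a ha b hb hab
  rcases hab.lt_or_gt with hlt | hlt
  · exact h.inner_q_eq_zero_of_lt (horth a ha) (hq b hb) hlt
  · rw [real_inner_comm]
    exact h.inner_q_eq_zero_of_lt (horth b hb) (hq a ha) hlt

def Invariant (v res q : ι → E) (i : ι) : Prop :=
  res i ∈ (span ℝ (v '' Set.Ioi i))ᗮ ∧ q i ∈ span ℝ (v '' Set.Ici i) ∧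
    v i ∈ span ℝ (q '' Set.Ici i)

theorem invariant_of_forall_lt (h : IsReverseGramSchmidt v res q) (hv : LinearIndependent ℝ v)
    {i : ι} (ih : ∀ j, i < j → Invariant v res q j) : Invariant v res q i := by
  have hspan : span ℝ (q '' Set.Ioi i) = span ℝ (v '' Set.Ioi i) :=
    le_antisymm (span_image_Ioi_le fun j hj => (ih j hj).2.1)
      (span_image_Ioi_le fun j hj => (ih j hj).2.2)
  have hpair := h.pairwise_inner_q_eq_zero (fun j hj => (ih j hj).1) fun j hj => (ih j hj).2.1
  have horth : res i ∈ (span ℝ (v '' Set.Ioi i))ᗮ := by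
    rw [← hspan, mem_orthogonal_span_iff]
    rintro _ ⟨j, hj, rfl⟩
    exact inner_eq_zero_symm.mp (h.inner_res_q_eq_zero hpair hj)
  have hdiff : v i - res i ∈ span ℝ (v '' Set.Ioi i) := hspan ▸ h.sub_res_mem_span_q i
  have hne : res i ≠ 0 := by
    rintro h0
    rw [h0, sub_zero] at hdiff
    exact hv.notMem_span_image (lt_irrefl i) hdiff
  have hinner : ⟪res i, v i⟫ = ‖res i‖ ^ 2 := by
    have h0 := horth _ hdiff
    rwa [inner_sub_left, real_inner_self_eq_norm_sq, sub_eq_zero, real_inner_comm] at h0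
  have hc : ⟪res i, v i⟫ ≠ 0 := hinner ▸ pow_ne_zero 2 (norm_ne_zero_iff.mpr hne)
  have hv_decomp : v i = (v i - res i) + ⟪res i, v i⟫ • q i := by
    rw [h.q_eq i, smul_inv_smul₀ hc, sub_add_cancel]
  have hvi_mem : v i ∈ span ℝ (v '' Set.Ici i) := subset_span ⟨i, Set.self_mem_Ici, rfl⟩
  refine ⟨horth, ?_, ?_⟩
  · rw [h.q_eq i]
    refine smul_mem _ _ ?_
    simpa using sub_mem hvi_mem (span_mono (Set.image_mono Set.Ioi_subset_Ici_self) hdiff)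
  · rw [hv_decomp]
    exact add_mem (span_mono (Set.image_mono Set.Ioi_subset_Ici_self) (h.sub_res_mem_span_q i))
      (smul_mem _ _ (subset_span ⟨i, Set.self_mem_Ici, rfl⟩))

variable [WellFoundedGT ι]

theorem invariant (h : IsReverseGramSchmidt v res q) (hv : LinearIndependent ℝ v) (i : ι) :
    Invariant v res q i := by
  induction i using WellFoundedGT.induction with
  | _ i ih => exact h.invariant_of_forall_lt hv ih

theorem res_mem_orthogonal (h : IsReverseGramSchmidt v res q) (hv : LinearIndependent ℝ v)
    (i : ι) : res i ∈ (span ℝ (v '' Set.Ioi i))ᗮ :=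
  (h.invariant hv i).1

theorem sub_res_mem_span (h : IsReverseGramSchmidt v res q) (hv : LinearIndependent ℝ v)
    (i : ι) : v i - res i ∈ span ℝ (v '' Set.Ioi i) :=
  span_image_Ioi_le (fun j _ => (h.invariant hv j).2.1) (h.sub_res_mem_span_q i)

theorem q_eq_of_span_eq {v' res' q' : ι → E} (h : IsReverseGramSchmidt v res q)
    (h' : IsReverseGramSchmidt v' res' q') (hv : LinearIndependent ℝ v)
    (hv' : LinearIndependent ℝ v') {i i' : ι} (hvi : v i = v' i')
    (hK : span ℝ (v '' Set.Ioi i) = span ℝ (v' '' Set.Ioi i')) : q i = q' i' := by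
  have hres : res i = res' i' := by
    refine eq_of_sub_mem_of_mem_orthogonal ?_ (h.res_mem_orthogonal hv i)
      (hK ▸ h'.res_mem_orthogonal hv' i')
    have hsub := sub_mem (hK ▸ h'.sub_res_mem_span hv' i') (h.sub_res_mem_span hv i)
    rwa [hvi, sub_sub_sub_cancel_left] at hsub
  rw [h.q_eq i, h'.q_eq i', hres, hvi]

end IsReverseGramSchmidt

end ReverseGramSchmidt

/-- If two permutations agree outside the block `[l, r]` and permute the same set of indices
inside the block, then the reverse Gram–Schmidt vectors computed for the two reordered
families agree at every position outside the block. -/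
theorem qwo_update_block {n : ℕ} (w : Fin n → EuclideanSpace ℝ (Fin n))
    (hw : LinearIndependent ℝ w)
    (π π' : Equiv.Perm (Fin n)) (l r : Fin n)
    (hagree : ∀ k : Fin n, (k < l ∨ r < k) → π k = π' k)
    (hset : (π : Fin n → Fin n) '' Set.Icc l r = (π' : Fin n → Fin n) '' Set.Icc l r)
    (res res' q q' : Fin n → EuclideanSpace ℝ (Fin n))
    (hres : ∀ i : Fin n,
      res i = w (π i) - ∑ j ∈ Finset.Ioi i, (⟪w (π i), q j⟫ / ‖q j‖ ^ 2) • q j)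
    (hq : ∀ i : Fin n, q i = (⟪res i, w (π i)⟫)⁻¹ • res i)
    (hres' : ∀ i : Fin n,
      res' i = w (π' i) - ∑ j ∈ Finset.Ioi i, (⟪w (π' i), q' j⟫ / ‖q' j‖ ^ 2) • q' j)
    (hq' : ∀ i : Fin n, q' i = (⟪res' i, w (π' i)⟫)⁻¹ • res' i) :
    ∀ k : Fin n, (k < l ∨ r < k) → q k = q' k := by
  intro k hk
  have hK : span ℝ ((w ∘ π) '' Set.Ioi k) = span ℝ ((w ∘ π') '' Set.Ioi k) := by
    rw [Set.image_comp, Set.image_comp, Set.image_Ioi_eq_of_eqOn_compl_Icc hagree hset hk]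
  exact IsReverseGramSchmidt.q_eq_of_span_eq ⟨hres, hq⟩ ⟨hres', hq'⟩
    (hw.comp π π.injective) (hw.comp π' π'.injective) (congrArg w (hagree k hk)) hK
end

section
/- Let Σ_X be an n×n symmetric positive definite matrix with spectral decomposition Σ_X = U S Uᵀ and whitening matrix W = U S^{-1/2} Uᵀ. Fix 1 ≤ j ≤ n, write C = rows 1..j of W and D = rows j+1..n of W, and let E be the j×n matrix whose k-th row is the residual of C[k] after orthogonal projection onto the row space of D. Then E Eᵀ equals the inverse of the top-left j×j block of Σ_X. -/
open Matrix

/-!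
The whitening matrix `W` is symmetric with `W Wᵀ = W² = Σ_X⁻¹`. Listing the rows of `W` as
`C` followed by `D`, the Gram matrix `W Wᵀ` becomes the block matrix
`[[C Cᵀ, C Dᵀ], [D Cᵀ, D Dᵀ]]`, whose inverse is `Σ_X`; so the top-left block of `Σ_X` is the
inverse of the Schur complement `C Cᵀ - C Dᵀ (D Dᵀ)⁻¹ D Cᵀ`. On the other hand `I - P` is a
symmetric idempotent, so `E Eᵀ = C (I - P) Cᵀ`, which is exactly that Schur complement.
`D Dᵀ` is invertible because it is the Gram matrix of some rows of the invertible matrix `W`.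
-/

namespace Matrix

variable {R : Type*} [CommRing R] {l m n : Type*}

theorem sub_mul_inv_mul_eq_inv_toBlocks₁₁_inv [Fintype m] [Fintype n] [DecidableEq m]
    [DecidableEq n] (A : Matrix m m R) (B : Matrix m n R) (C : Matrix n m R) (D : Matrix n n R)
    (hM : IsUnit (fromBlocks A B C D).det) (hD : IsUnit D.det) :
    A - B * D⁻¹ * C = ((fromBlocks A B C D)⁻¹.toBlocks₁₁)⁻¹ := by
  have := invertibleOfIsUnitDet _ hM
  have := invertibleOfIsUnitDet _ hD
  have := invertibleOfFromBlocks₂₂Invertible A B C D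
  rw [← invOf_eq_nonsing_inv D, ← invOf_eq_nonsing_inv (fromBlocks A B C D),
    invOf_fromBlocks₂₂_eq, toBlocks_fromBlocks₁₁]
  exact (inv_eq_right_inv (invOf_mul_self _)).symm

theorem submatrix_mul_transpose_eq_fromBlocks {p k : Type*} [Fintype k] (M : Matrix n k R)
    (e : m ⊕ p → n) :
    (M * Mᵀ).submatrix e e = fromBlocks
      (M.submatrix (e ∘ Sum.inl) id * (M.submatrix (e ∘ Sum.inl) id)ᵀ)
      (M.submatrix (e ∘ Sum.inl) id * (M.submatrix (e ∘ Sum.inr) id)ᵀ)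
      (M.submatrix (e ∘ Sum.inr) id * (M.submatrix (e ∘ Sum.inl) id)ᵀ)
      (M.submatrix (e ∘ Sum.inr) id * (M.submatrix (e ∘ Sum.inr) id)ᵀ) := by
  ext (i | i) (i' | i') <;> simp [mul_apply]

theorem conj_diagonal_mul_conj_diagonal [Fintype n] [DecidableEq n] {U : Matrix n n R}
    (hU : U * Uᵀ = 1) (a b : n → R) :
    U * diagonal a * Uᵀ * (U * diagonal b * Uᵀ) = U * diagonal (a * b) * Uᵀ := by
  calc U * diagonal a * Uᵀ * (U * diagonal b * Uᵀ)
      = U * diagonal a * (Uᵀ * U) * diagonal b * Uᵀ := by simp only [Matrix.mul_assoc]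
    _ = U * diagonal (a * b) * Uᵀ := by
        rw [mul_eq_one_comm.mp hU, Matrix.mul_one, Matrix.mul_assoc U, diagonal_mul_diagonal]
        rfl

section RowSpaceProj

variable [Fintype m] [DecidableEq m] [Fintype n]

noncomputable def rowSpaceProj (D : Matrix m n R) : Matrix n n R := Dᵀ * (D * Dᵀ)⁻¹ * D

theorem rowSpaceProj_transpose (D : Matrix m n R) : (rowSpaceProj D)ᵀ = rowSpaceProj D := by
  simp [rowSpaceProj, transpose_mul, transpose_nonsing_inv, Matrix.mul_assoc]

theorem rowSpaceProj_mul_self (D : Matrix m n R) (hD : IsUnit (D * Dᵀ).det) :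
    rowSpaceProj D * rowSpaceProj D = rowSpaceProj D := by
  calc rowSpaceProj D * rowSpaceProj D
      = Dᵀ * ((D * Dᵀ)⁻¹ * (D * Dᵀ)) * (D * Dᵀ)⁻¹ * D := by
        simp only [rowSpaceProj, Matrix.mul_assoc]
    _ = rowSpaceProj D := by rw [nonsing_inv_mul _ hD, Matrix.mul_one, rowSpaceProj]

theorem mul_one_sub_rowSpaceProj_mul_transpose [DecidableEq n] (C : Matrix l n R)
    (D : Matrix m n R) (hD : IsUnit (D * Dᵀ).det) :
    C * (1 - rowSpaceProj D) * (C * (1 - rowSpaceProj D))ᵀ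
      = C * Cᵀ - C * Dᵀ * (D * Dᵀ)⁻¹ * (D * Cᵀ) := by
  have hidem : (1 - rowSpaceProj D) * (1 - rowSpaceProj D) = 1 - rowSpaceProj D := by
    simp only [Matrix.mul_sub, Matrix.sub_mul, Matrix.mul_one, Matrix.one_mul,
      rowSpaceProj_mul_self D hD, sub_self, sub_zero]
  calc C * (1 - rowSpaceProj D) * (C * (1 - rowSpaceProj D))ᵀ
      = C * ((1 - rowSpaceProj D) * (1 - rowSpaceProj D)) * Cᵀ := by
        rw [transpose_mul, transpose_sub, transpose_one, rowSpaceProj_transpose]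
        simp only [Matrix.mul_assoc]
    _ = C * Cᵀ - C * Dᵀ * (D * Dᵀ)⁻¹ * (D * Cᵀ) := by
        rw [hidem, Matrix.mul_sub, Matrix.sub_mul, Matrix.mul_one, rowSpaceProj]
        simp only [Matrix.mul_assoc]

end RowSpaceProj

variable [Fintype n] [DecidableEq n]

theorem conj_diagonal_mul_whitening_mul_transpose {U : Matrix n n ℝ} {s : n → ℝ}
    (hs : ∀ i, 0 < s i) (hU : U * Uᵀ = 1) :
    U * diagonal s * Uᵀ * (U * diagonal (fun i => (√(s i))⁻¹) * Uᵀ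
      * (U * diagonal (fun i => (√(s i))⁻¹) * Uᵀ)ᵀ) = 1 := by
  have hsymm : (U * diagonal (fun i => (√(s i))⁻¹) * Uᵀ)ᵀ
      = U * diagonal (fun i => (√(s i))⁻¹) * Uᵀ := by
    simp [transpose_mul, Matrix.mul_assoc]
  have hsqrt : (fun i => (√(s i))⁻¹) * (fun i => (√(s i))⁻¹) = s⁻¹ := by
    ext i
    simp [← mul_inv, Real.mul_self_sqrt (hs i).le]
  have hcancel : s * s⁻¹ = 1 := by
    ext i
    simp [(hs i).ne']
  rw [hsymm, conj_diagonal_mul_conj_diagonal hU, hsqrt, conj_diagonal_mul_conj_diagonal hU,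
    hcancel, Pi.one_def, diagonal_one, Matrix.mul_one, hU]

theorem posDef_submatrix_mul_transpose {W : Matrix n n ℝ} (hW : IsUnit W)
    {f : m → n} (hf : Function.Injective f) :
    (W.submatrix f id * (W.submatrix f id)ᵀ).PosDef := by
  have hWW : (W * Wᵀ).PosDef := by
    simpa [conjTranspose_eq_transpose_of_trivial] using
      PosDef.mul_conjTranspose_self W (vecMul_injective_iff_isUnit.mpr hW)
  rw [transpose_submatrix, ← submatrix_mul _ _ _ _ _ Function.bijective_id]
  exact hWW.submatrix hf

end Matrix

def finSumFinSubEquiv {n j : ℕ} (hj : j ≤ n) : Fin j ⊕ Fin (n - j) ≃ Fin n :=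
  finSumFinEquiv.trans (finCongr (Nat.add_sub_cancel' hj))

theorem finSumFinSubEquiv_comp_inl {n j : ℕ} (hj : j ≤ n) :
    finSumFinSubEquiv hj ∘ Sum.inl = Fin.castLE hj := by
  ext i
  simp [finSumFinSubEquiv]

theorem finSumFinSubEquiv_comp_inr {n j : ℕ} (hj : j ≤ n) :
    finSumFinSubEquiv hj ∘ Sum.inr =
      fun k : Fin (n - j) => (⟨j + k.1, Nat.add_lt_of_lt_sub' k.2⟩ : Fin n) := by
  ext k
  simp [finSumFinSubEquiv]

/-- With `W` the whitening matrix of `Σ_X = U S Uᵀ`, `C` the first `j` rows of `W`,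
`D` the last `n - j` rows, `P` the orthogonal projection onto the row space of `D`,
and `E = C (I - P)` the matrix of residuals, we have `E Eᵀ = (Σ_X restricted to the
first j coordinates)⁻¹`. -/
theorem EEt_eq_inv_cov_block {n j : ℕ} (hj : j ≤ n)
    (Sx U W : Matrix (Fin n) (Fin n) ℝ) (s : Fin n → ℝ) (hs : ∀ i, 0 < s i)
    (hU : U * Uᵀ = 1)
    (hSx : Sx = U * Matrix.diagonal s * Uᵀ)
    (hW : W = U * Matrix.diagonal (fun i => (Real.sqrt (s i))⁻¹) * Uᵀ)
    (C : Matrix (Fin j) (Fin n) ℝ) (D : Matrix (Fin (n - j)) (Fin n) ℝ)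
    (hC : C = W.submatrix (Fin.castLE hj) id)
    (hD : D = W.submatrix (fun k : Fin (n - j) => (⟨j + k.1, by omega⟩ : Fin n)) id)
    (P : Matrix (Fin n) (Fin n) ℝ) (hP : P = Dᵀ * (D * Dᵀ)⁻¹ * D)
    (E : Matrix (Fin j) (Fin n) ℝ) (hE : E = C * (1 - P)) :
    E * Eᵀ = (Sx.submatrix (Fin.castLE hj) (Fin.castLE hj))⁻¹ := by
  have hSxWW : Sx * (W * Wᵀ) = 1 := hSx ▸ hW ▸ conj_diagonal_mul_whitening_mul_transpose hs hU
  have hWunit : IsUnit W :=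
    .of_mul_eq_one (Wᵀ * Sx) (by rw [← Matrix.mul_assoc]; exact mul_eq_one_comm.mp hSxWW)
  set e := finSumFinSubEquiv hj
  have hblocks : (W * Wᵀ).submatrix e e = fromBlocks (C * Cᵀ) (C * Dᵀ) (D * Cᵀ) (D * Dᵀ) := by
    rw [submatrix_mul_transpose_eq_fromBlocks, finSumFinSubEquiv_comp_inl,
      finSumFinSubEquiv_comp_inr, hC, hD]
  have hblocks_det : IsUnit (fromBlocks (C * Cᵀ) (C * Dᵀ) (D * Cᵀ) (D * Dᵀ)).det := by
    rw [← hblocks, det_submatrix_equiv_self]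
    exact isUnit_det_of_left_inverse hSxWW
  have hDD_det : IsUnit (D * Dᵀ).det := by
    rw [← isUnit_iff_isUnit_det, hD]
    refine (posDef_submatrix_mul_transpose hWunit fun a b h => ?_).isUnit
    simpa [Fin.ext_iff] using h
  calc E * Eᵀ = C * Cᵀ - C * Dᵀ * (D * Dᵀ)⁻¹ * (D * Cᵀ) := by
        rw [hE, hP]
        exact mul_one_sub_rowSpaceProj_mul_transpose C D hDD_det
    _ = ((fromBlocks (C * Cᵀ) (C * Dᵀ) (D * Cᵀ) (D * Dᵀ))⁻¹.toBlocks₁₁)⁻¹ :=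
        sub_mul_inv_mul_eq_inv_toBlocks₁₁_inv _ _ _ _ hblocks_det hDD_det
    _ = (Sx.submatrix (Fin.castLE hj) (Fin.castLE hj))⁻¹ := by
        rw [← hblocks, inv_submatrix_equiv, inv_eq_left_inv hSxWW, ← finSumFinSubEquiv_comp_inl]
        rfl
end
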